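/- Let W, V_1, ..., V_n be a Nica-covariant isometric representation of O_n on H such that both W is a pure isometry and the row isometry {V_1,...,V_n} is pure, with W restricted to L_0 = ⋂_i ker V_i* a pure isometry. Then setting L = L_0 ∩ ker W*, the subspaces V_μ W^m L (μ a word in {1,...,n}, m ≥ 0) are pairwise orthogonal and their closed span is H; hence the representation is a direct sum of dim L copies of the left regular representation of O_n. -/

import Mathlib

open ContinuousLinearMap

/-!
Write `L₀ = ⋂ᵢ ker Vᵢ*`. Nica covariance gives `V₁* W = W Vₙ*`, and `Vᵢ₊₁ = W Vᵢ` gives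
`Vᵢ₊₁* W = Vᵢ*`, so `W` leaves `L₀` invariant. Hence `W^m L` lies in the wandering space `L₀`
of the row isometry, so `V_μ W^m L ⟂ V_ν W^k L` for `μ ≠ ν`, while for `μ = ν` the question
reduces to `W^m L ⟂ W^k L`, which holds because `L ⊆ ker W*` is wandering for `W`.
Totality: `H` is the closed span of the `V_μ L₀`, and each `L₀` is the closed span of the
`W^m L`.
-/

section Isometry

variable {𝕜 E : Type*} [RCLike 𝕜] [NormedAddCommGroup E] [InnerProductSpace 𝕜 E]
  [CompleteSpace E] {A : E →L[𝕜] E}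

theorem adjoint_apply_apply_of_adjoint_comp_self (hA : adjoint A ∘L A = 1) (z : E) :
    adjoint A (A z) = z := by
  simpa using DFunLike.congr_fun hA z

theorem inner_pow_apply_pow_apply_of_adjoint_comp_self (hA : adjoint A ∘L A = 1) (m : ℕ)
    (a b : E) : inner 𝕜 ((A ^ m) a) ((A ^ m) b) = inner 𝕜 a b := by
  induction m with
  | zero => simp
  | succ m ih =>
    rw [pow_succ', mul_apply_eq_comp, mul_apply_eq_comp, ← adjoint_inner_right,
      adjoint_apply_apply_of_adjoint_comp_self hA, ih]

theorem inner_pow_apply_pow_apply_eq_zero_of_ne (hA : adjoint A ∘L A = 1) {x y : E}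
    (hx : adjoint A x = 0) (hy : adjoint A y = 0) {m k : ℕ} (hmk : m ≠ k) :
    inner 𝕜 ((A ^ m) x) ((A ^ k) y) = 0 := by
  wlog hlt : m < k generalizing m k x y
  · exact inner_eq_zero_symm.mp (this hy hx hmk.symm (by omega))
  obtain ⟨j, rfl⟩ := Nat.exists_eq_add_of_lt hlt
  rw [add_assoc, pow_add, mul_apply_eq_comp, inner_pow_apply_pow_apply_of_adjoint_comp_self hA,
    pow_succ', mul_apply_eq_comp, ← adjoint_inner_left, hx, inner_zero_left]

end Isometry

section RowIsometry

variable {𝕜 E ι : Type*} [RCLike 𝕜] [NormedAddCommGroup E] [InnerProductSpace 𝕜 E]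
  [CompleteSpace E] [DecidableEq ι] {V : ι → E →L[𝕜] E}

theorem inner_listProd_apply_listProd_apply (hViso : ∀ i, adjoint (V i) ∘L V i = 1)
    (horth : ∀ i j, i ≠ j → adjoint (V i) ∘L V j = 0) {x y : E}
    (hx : ∀ i, adjoint (V i) x = 0) (hy : ∀ i, adjoint (V i) y = 0) (μ ν : List ι) :
    inner 𝕜 ((μ.map V).prod x) ((ν.map V).prod y) = if μ = ν then inner 𝕜 x y else 0 := by
  induction μ generalizing ν with
  | nil =>
    cases ν with
    | nil => simp
    | cons j ν =>
      simp only [List.map_cons, List.prod_cons, mul_apply_eq_comp, List.map_nil, List.prod_nil,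
        one_apply_eq_self]
      rw [← adjoint_inner_left, hx, inner_zero_left, if_neg (List.cons_ne_nil j ν).symm]
  | cons i μ ih =>
    cases ν with
    | nil =>
      simp only [List.map_cons, List.prod_cons, mul_apply_eq_comp, List.map_nil, List.prod_nil,
        one_apply_eq_self]
      rw [← adjoint_inner_right, hy, inner_zero_right, if_neg (List.cons_ne_nil i μ)]
    | cons j ν =>
      simp only [List.map_cons, List.prod_cons, mul_apply_eq_comp]
      rw [← adjoint_inner_right, ← comp_apply (adjoint (V i))]
      by_cases hij : i = j
      · rw [← hij, hViso, one_apply_eq_self, ih]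
        simp
      · rw [horth i j hij, zero_apply, inner_zero_right]
        simp [hij]

end RowIsometry

theorem Submodule.topologicalClosure_iSup_iSup_map_comp_eq_top {R M ι κ : Type*} [Semiring R]
    [TopologicalSpace R] [AddCommMonoid M] [TopologicalSpace M] [Module R M] [ContinuousAdd M]
    [ContinuousSMul R M] (T : ι → M →L[R] M) (S : κ → M →L[R] M) (K L₀ : Submodule R M)
    (hT : (⨆ i, L₀.map (T i : M →ₗ[R] M)).topologicalClosure = ⊤)
    (hS : (⨆ j, K.map (S j : M →ₗ[R] M)).topologicalClosure = L₀) :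
    (⨆ i, ⨆ j, K.map ((T i ∘L S j : M →L[R] M) : M →ₗ[R] M)).topologicalClosure = ⊤ := by
  refine top_le_iff.mp (hT ▸ topologicalClosure_minimal _ (iSup_le fun i ↦ ?_)
    (isClosed_topologicalClosure _))
  calc L₀.map (T i : M →ₗ[R] M)
      ≤ (⨆ j, (K.map (S j : M →ₗ[R] M)).map (T i : M →ₗ[R] M)).topologicalClosure := by
        rw [← map_iSup, ← hS]; exact topologicalClosure_map _ _
    _ ≤ _ := by
        simp only [← map_comp]
        exact topologicalClosure_mono (le_iSup_of_le i le_rfl)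

section Nica

variable {H : Type*} [NormedAddCommGroup H] [InnerProductSpace ℂ H] [CompleteSpace H]
  {n : ℕ} {W : H →L[ℂ] H} {V : Fin n → H →L[ℂ] H}

theorem adjoint_apply_apply_eq_zero_of_nica (hn : 0 < n) (hWiso : adjoint W ∘L W = 1)
    (hWV : ∀ i : Fin n, ∀ h : (i : ℕ) + 1 < n, W ∘L V i = V ⟨(i : ℕ) + 1, h⟩)
    (hNC : adjoint W ∘L V ⟨0, hn⟩ = V ⟨n - 1, Nat.sub_lt hn one_pos⟩ ∘L adjoint W) {z : H}
    (hz : ∀ i, adjoint (V i) z = 0) (i : Fin n) : adjoint (V i) (W z) = 0 := by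
  obtain ⟨_ | i, hi⟩ := i
  · have hNC' : adjoint (V ⟨0, hn⟩) ∘L W = W ∘L adjoint (V ⟨n - 1, Nat.sub_lt hn one_pos⟩) := by
      simpa [adjoint_comp] using congrArg adjoint hNC
    rw [← comp_apply, hNC', comp_apply, hz, map_zero]
  · rw [← hWV ⟨i, by omega⟩ hi, adjoint_comp, comp_apply,
      adjoint_apply_apply_of_adjoint_comp_self hWiso, hz]

theorem adjoint_apply_pow_apply_eq_zero_of_nica (hn : 0 < n) (hWiso : adjoint W ∘L W = 1)
    (hWV : ∀ i : Fin n, ∀ h : (i : ℕ) + 1 < n, W ∘L V i = V ⟨(i : ℕ) + 1, h⟩)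
    (hNC : adjoint W ∘L V ⟨0, hn⟩ = V ⟨n - 1, Nat.sub_lt hn one_pos⟩ ∘L adjoint W) {z : H}
    (hz : ∀ i, adjoint (V i) z = 0) (m : ℕ) (i : Fin n) : adjoint (V i) ((W ^ m) z) = 0 := by
  induction m generalizing i with
  | zero => exact hz i
  | succ m ih =>
    rw [pow_succ', mul_apply_eq_comp]
    exact adjoint_apply_apply_eq_zero_of_nica hn hWiso hWV hNC ih i

end Nica

/-- A Nica-covariant weak bi-shift is a direct sum of left regular representations:
if `{W, V_1, …, V_n}` is a Nica-covariant isometric representation of `O_n` with `W`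
pure, the row isometry `{V_i}` pure, and `W` restricted to `L_0 = ⋂_i ker V_i*` pure,
then for `L = L_0 ⊓ ker W*` the subspaces `V_μ W^m L` are pairwise orthogonal and
their closed span is all of `H` (so the representation is a direct sum of `dim L`
copies of the left regular representation of `O_n`). -/
theorem stmt_18 {H : Type*} [NormedAddCommGroup H] [InnerProductSpace ℂ H] [CompleteSpace H]
    (n : ℕ) (hn : 0 < n) (W : H →L[ℂ] H) (V : Fin n → H →L[ℂ] H)
    (hWiso : adjoint W ∘L W = 1)
    (hViso : ∀ i, adjoint (V i) ∘L V i = 1)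
    (horth : ∀ i j, i ≠ j → adjoint (V i) ∘L V j = 0)
    (hWV : ∀ i : Fin n, ∀ h : (i : ℕ) + 1 < n, W ∘L V i = V ⟨(i : ℕ) + 1, h⟩)
    (hNC : adjoint W ∘L V ⟨0, hn⟩ = V ⟨n - 1, by omega⟩ ∘L adjoint W)
    (L₀ : Submodule ℂ H) (hL₀ : L₀ = ⨅ i : Fin n, LinearMap.ker (adjoint (V i) : H →ₗ[ℂ] H))
    -- the row isometry `{V_1, …, V_n}` is pure:
    (hVpure : (⨆ μ : List (Fin n),
        Submodule.map (((μ.map V).prod : H →L[ℂ] H) : H →ₗ[ℂ] H) L₀).topologicalClosure = ⊤)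
    -- `W` restricted to `L₀` is a pure isometry:
    (hWL₀pure : (⨆ m : ℕ,
        Submodule.map ((W ^ m : H →L[ℂ] H) : H →ₗ[ℂ] H) (LinearMap.ker (adjoint W : H →ₗ[ℂ] H) ⊓ L₀)).topologicalClosure = L₀)
    (L : Submodule ℂ H) (hL : L = L₀ ⊓ LinearMap.ker (adjoint W : H →ₗ[ℂ] H)) :
    (∀ μ ν : List (Fin n), ∀ m k : ℕ, (μ, m) ≠ (ν, k) →
        ∀ x ∈ L, ∀ y ∈ L,
          (inner ℂ ((μ.map V).prod ((W ^ m) x)) ((ν.map V).prod ((W ^ k) y)) : ℂ) = 0) ∧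
      (⨆ μ : List (Fin n), ⨆ m : ℕ,
        Submodule.map (((μ.map V).prod ∘L W ^ m : H →L[ℂ] H) : H →ₗ[ℂ] H) L).topologicalClosure = ⊤ := by
  have hmemL : ∀ x ∈ L, (∀ i, adjoint (V i) x = 0) ∧ adjoint W x = 0 := by
    simp [hL, hL₀]
  refine ⟨fun μ ν m k hne x hx y hy ↦ ?_, ?_⟩
  · rw [inner_listProd_apply_listProd_apply hViso horth
      (adjoint_apply_pow_apply_eq_zero_of_nica hn hWiso hWV hNC (hmemL x hx).1 m)
      (adjoint_apply_pow_apply_eq_zero_of_nica hn hWiso hWV hNC (hmemL y hy).1 k)]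
    split_ifs with hμν
    · exact inner_pow_apply_pow_apply_eq_zero_of_ne hWiso (hmemL x hx).2 (hmemL y hy).2
        fun hmk ↦ hne (by rw [hμν, hmk])
    · rfl
  · rw [inf_comm, ← hL] at hWL₀pure
    exact Submodule.topologicalClosure_iSup_iSup_map_comp_eq_top _ _ L L₀ hVpure hWL₀pure
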